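/- For any θ > 0 and any natural number n, the quantity p(n, θ) := ∑_{k=1}^{n+1} C(n+1,k) (−1)^{k+1} / (1 + √(kθ) arctan √(kθ)) satisfies 0 ≤ p(n, θ) ≤ 1 and p(n, θ) is nondecreasing in n. -/

import Mathlib

/-!
With `c k = (1 + √(kθ) arctan √(kθ))⁻¹` we have `c 0 = 1` and `p(n, θ) = 1 - (-Δ)^(n+1) c 0`.
Hence everything follows once `c` is totally monotone in Hausdorff's sense, i.e. all iterated
differences `(-Δ)^m c` are nonnegative: then `m ↦ (-Δ)^m c 0` decreases from `c 0 = 1` and stays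
nonnegative.

Total monotonicity is preserved by sums, products, integrals and pointwise limits, and holds for
geometric sequences `r^k` with `0 ≤ r ≤ 1`, hence for `(1 + k a)⁻¹ = ∫₀^∞ e^{-t} (e^{-a t})^k dt`.
Since `√s arctan √s = ∫₀¹ s / (1 + s t²) dt`, cutting this integral off at `ε > 0` gives
`1 + √s (arctan √s - arctan (ε √s)) = ε⁻¹ - L_ε(s)` with `L_ε(s) = ∫_ε^1 t⁻² (1 + s t²)⁻¹ dt`.
Now `k ↦ L_ε(kθ)` is totally monotone and `ε L_ε < 1`, so the truncated sequence
`ε (1 - ε L_ε)⁻¹ = ε ∑ₘ (ε L_ε)^m` is totally monotone, and `c` is its limit as `ε → 0`.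
-/

open Real Finset

/-- The conditional coverage probability with `n` competing users in the
interference-limited case (`σ² = 0`, `α = 4`). -/
noncomputable def condCoverage (n : ℕ) (θ : ℝ) : ℝ :=
  ∑ k ∈ Finset.Icc 1 (n + 1),
    ((n + 1).choose k : ℝ) * (-1) ^ (k + 1)
      / (1 + Real.sqrt (k * θ) * Real.arctan (Real.sqrt (k * θ)))

open Filter Topology MeasureTheory

def negDiff : (ℕ → ℝ) →ₗ[ℝ] (ℕ → ℝ) where
  toFun a k := a k - a (k + 1)
  map_add' a b := by ext k; simp only [Pi.add_apply]; ring
  map_smul' r a := by ext k; simp only [Pi.smul_apply, smul_eq_mul, RingHom.id_apply]; ring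

@[simp]
lemma negDiff_apply (a : ℕ → ℝ) (k : ℕ) : negDiff a k = a k - a (k + 1) := rfl

lemma negDiff_pow_succ_apply (n : ℕ) (a : ℕ → ℝ) :
    (negDiff ^ (n + 1)) a = (negDiff ^ n) (negDiff a) := by
  rw [pow_succ, Module.End.mul_apply]

lemma negDiff_pow_succ_apply' (n : ℕ) (a : ℕ → ℝ) :
    (negDiff ^ (n + 1)) a = negDiff ((negDiff ^ n) a) := by
  rw [pow_succ', Module.End.mul_apply]

lemma negDiff_pow_eq_smul_fwdDiff_iter (n : ℕ) (a : ℕ → ℝ) :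
    (negDiff ^ n) a = (-1 : ℝ) ^ n • (fwdDiff 1)^[n] a := by
  induction n generalizing a with
  | zero => simp
  | succ n ih =>
    have h : negDiff a = (-1 : ℝ) • fwdDiff 1 a := by ext k; simp [fwdDiff]
    rw [negDiff_pow_succ_apply, ih, h, Function.iterate_succ_apply, fwdDiff_iter_const_smul,
      smul_smul, pow_succ]

lemma negDiff_pow_apply_eq_sum (n : ℕ) (a : ℕ → ℝ) (k : ℕ) :
    (negDiff ^ n) a k = ∑ j ∈ range (n + 1), (-1 : ℝ) ^ j * n.choose j * a (k + j) := by
  rw [negDiff_pow_eq_smul_fwdDiff_iter, Pi.smul_apply, fwdDiff_iter_eq_sum_shift, smul_sum]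
  refine sum_congr rfl fun j hj => ?_
  have hsign : (-1 : ℝ) ^ n * (-1) ^ (n - j) = (-1) ^ j := by
    rw [← pow_add, show n + (n - j) = j + 2 * (n - j) by grind, pow_add, pow_mul]
    norm_num
  simp only [zsmul_eq_mul, smul_eq_mul, mul_one]
  push_cast
  rw [← hsign]
  ring

lemma negDiff_pow_comp_add_one (n : ℕ) (a : ℕ → ℝ) (k : ℕ) :
    (negDiff ^ n) (fun j => a (j + 1)) k = (negDiff ^ n) a (k + 1) := by
  induction n generalizing a with
  | zero => rfl
  | succ n ih => rw [negDiff_pow_succ_apply, negDiff_pow_succ_apply, ← ih]; rfl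

lemma negDiff_mul (a b : ℕ → ℝ) :
    negDiff (a * b) = a * negDiff b + negDiff a * fun k => b (k + 1) := by
  ext k; simp only [negDiff_apply, Pi.mul_apply, Pi.add_apply]; ring

lemma tendsto_negDiff_pow {ι : Type*} {l : Filter ι} {f : ι → ℕ → ℝ} {a : ℕ → ℝ}
    (h : ∀ k, Tendsto (fun i => f i k) l (𝓝 (a k))) (n k : ℕ) :
    Tendsto (fun i => (negDiff ^ n) (f i) k) l (𝓝 ((negDiff ^ n) a k)) := by
  induction n generalizing f a with
  | zero => exact h k
  | succ n ih =>
    simp only [negDiff_pow_succ_apply]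
    exact ih fun k => (h k).sub (h (k + 1))

lemma negDiff_pow_integral {X : Type*} [MeasurableSpace X] {μ : Measure X} {f : X → ℕ → ℝ}
    (hf : ∀ k, Integrable (fun x => f x k) μ) (n k : ℕ) :
    (negDiff ^ n) (fun k => ∫ x, f x k ∂μ) k = ∫ x, (negDiff ^ n) (f x) k ∂μ := by
  induction n generalizing f with
  | zero => rfl
  | succ n ih =>
    have h : negDiff (fun k => ∫ x, f x k ∂μ) = fun k => ∫ x, negDiff (f x) k ∂μ := by
      ext k; exact (integral_sub (hf k) (hf (k + 1))).symm
    simp only [negDiff_pow_succ_apply, h]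
    exact ih fun k => (hf k).sub (hf (k + 1))

def TotallyMonotone (a : ℕ → ℝ) : Prop := ∀ n k, 0 ≤ (negDiff ^ n) a k

namespace TotallyMonotone

variable {a b : ℕ → ℝ}

lemma nonneg (ha : TotallyMonotone a) (k : ℕ) : 0 ≤ a k := ha 0 k

lemma negDiff (ha : TotallyMonotone a) : TotallyMonotone (negDiff a) := fun n k => by
  simpa only [negDiff_pow_succ_apply] using ha (n + 1) k

lemma comp_add_one (ha : TotallyMonotone a) : TotallyMonotone fun k => a (k + 1) :=
  fun n k => by simpa only [negDiff_pow_comp_add_one] using ha n (k + 1)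

lemma sum {ι : Type*} {s : Finset ι} {f : ι → ℕ → ℝ} (hf : ∀ i ∈ s, TotallyMonotone (f i)) :
    TotallyMonotone (∑ i ∈ s, f i) := fun n k => by
  simpa only [map_sum, Finset.sum_apply] using sum_nonneg fun i hi => hf i hi n k

lemma mul (ha : TotallyMonotone a) (hb : TotallyMonotone b) : TotallyMonotone (a * b) := by
  intro n
  induction n generalizing a b with
  | zero => exact fun k => mul_nonneg (ha.nonneg k) (hb.nonneg k)
  | succ n ih =>
    intro k
    rw [negDiff_pow_succ_apply, negDiff_mul, map_add, Pi.add_apply]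
    exact add_nonneg (ih ha hb.negDiff k) (ih ha.negDiff hb.comp_add_one k)

lemma const {c : ℝ} (hc : 0 ≤ c) : TotallyMonotone fun _ => c := by
  rintro (_ | n) k
  · exact hc
  · rw [negDiff_pow_succ_apply, show _root_.negDiff (fun _ => c) = 0 by ext; simp, map_zero]
    rfl

lemma const_mul (ha : TotallyMonotone a) {c : ℝ} (hc : 0 ≤ c) :
    TotallyMonotone fun k => c * a k :=
  (const hc).mul ha

lemma pow (ha : TotallyMonotone a) (m : ℕ) : TotallyMonotone (a ^ m) := by
  induction m with
  | zero => exact const zero_le_one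
  | succ m ih => rw [pow_succ]; exact ih.mul ha

lemma of_tendsto {ι : Type*} {l : Filter ι} [l.NeBot] {f : ι → ℕ → ℝ}
    (hf : ∀ᶠ i in l, TotallyMonotone (f i)) (h : ∀ k, Tendsto (fun i => f i k) l (𝓝 (a k))) :
    TotallyMonotone a := fun n k =>
  ge_of_tendsto (tendsto_negDiff_pow h n k) (hf.mono fun _ hi => hi n k)

lemma integral {X : Type*} [MeasurableSpace X] {μ : Measure X} {f : X → ℕ → ℝ}
    (hf : ∀ᵐ x ∂μ, TotallyMonotone (f x)) (hint : ∀ k, Integrable (fun x => f x k) μ) :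
    TotallyMonotone fun k => ∫ x, f x k ∂μ := fun n k => by
  rw [negDiff_pow_integral hint]
  exact integral_nonneg_of_ae (hf.mono fun _ hx => hx n k)

lemma inv_one_sub (ha : TotallyMonotone a) (ha1 : ∀ k, a k < 1) :
    TotallyMonotone fun k => (1 - a k)⁻¹ :=
  of_tendsto (f := fun N => ∑ m ∈ range N, a ^ m) (l := atTop)
    (Eventually.of_forall fun _ => sum fun m _ => ha.pow m)
    fun k => by
      simpa only [Finset.sum_apply, Pi.pow_apply] using
        (hasSum_geometric_of_lt_one (ha.nonneg k) (ha1 k)).tendsto_sum_nat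

lemma antitone_negDiff_pow (ha : TotallyMonotone a) (k : ℕ) :
    Antitone fun n => (_root_.negDiff ^ n) a k :=
  antitone_nat_of_succ_le fun n => by
    rw [negDiff_pow_succ_apply', negDiff_apply]
    linarith [ha n (k + 1)]

end TotallyMonotone

lemma negDiff_pow_geom (r : ℝ) (n : ℕ) :
    (negDiff ^ n) (fun k => r ^ k) = fun k => (1 - r) ^ n * r ^ k := by
  induction n with
  | zero => ext; simp
  | succ n ih => ext k; simp only [negDiff_pow_succ_apply', ih, negDiff_apply]; ring

lemma totallyMonotone_geom {r : ℝ} (hr0 : 0 ≤ r) (hr1 : r ≤ 1) :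
    TotallyMonotone fun k => r ^ k := fun n k => by
  rw [negDiff_pow_geom]
  exact mul_nonneg (pow_nonneg (sub_nonneg.2 hr1) n) (pow_nonneg hr0 k)

lemma totallyMonotone_inv_one_add_mul {c : ℝ} (hc : 0 ≤ c) :
    TotallyMonotone fun k : ℕ => (1 + k * c)⁻¹ := by
  have hexp (k : ℕ) :
      (fun t : ℝ => exp (-t) * exp (-(c * t)) ^ k) = fun t => exp (-(1 + k * c) * t) := by
    ext t; rw [← exp_nat_mul, ← exp_add]; ring_nf
  have hrepr (k : ℕ) : (1 + k * c)⁻¹ = ∫ t in Set.Ioi 0, exp (-t) * exp (-(c * t)) ^ k := by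
    have hpos : 0 < 1 + k * c := by positivity
    rw [hexp, integral_exp_mul_Ioi (by linarith) 0, mul_zero, exp_zero, neg_div_neg_eq, one_div]
  simp only [hrepr]
  refine TotallyMonotone.integral (ae_restrict_of_forall_mem measurableSet_Ioi fun t ht => ?_)
    fun k => ?_
  · have ht : (0 : ℝ) < t := ht
    exact (totallyMonotone_geom (exp_pos _).le (exp_le_one_iff.2 (by nlinarith))).const_mul
      (exp_pos _).le
  · rw [hexp]
    exact integrableOn_exp_mul_Ioi (by nlinarith) 0

lemma continuousOn_inv_sq_mul_inv_one_add_mul_sq {s : ℝ} (hs : 0 ≤ s) :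
    ContinuousOn (fun t : ℝ => (t ^ 2)⁻¹ * (1 + s * t ^ 2)⁻¹) (Set.Ioi 0) := by
  intro t ht
  have ht : (0 : ℝ) < t := ht
  have : 0 < 1 + s * t ^ 2 := by positivity
  fun_prop (disch := positivity)

lemma integral_inv_sq_mul_inv_one_add_mul_sq {s ε : ℝ} (hs : 0 ≤ s) (hε : 0 < ε) (hε1 : ε ≤ 1) :
    ∫ t in ε..1, (t ^ 2)⁻¹ * (1 + s * t ^ 2)⁻¹
      = ε⁻¹ - 1 - √s * (arctan √s - arctan (ε * √s)) := by
  have hpos : Set.uIcc ε 1 ⊆ Set.Ioi 0 := by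
    rw [Set.uIcc_of_le hε1]; exact fun t ht => hε.trans_le ht.1
  have hderiv : ∀ t ∈ Set.uIcc ε 1,
      HasDerivAt (fun u => -u⁻¹ - √s * arctan (u * √s)) ((t ^ 2)⁻¹ * (1 + s * t ^ 2)⁻¹) t := by
    intro t ht
    have ht : (0 : ℝ) < t := hpos ht
    refine ((hasDerivAt_inv ht.ne').neg.sub
      (((hasDerivAt_mul_const √s).arctan).const_mul √s)).congr_deriv ?_
    have : 0 < 1 + s * t ^ 2 := by positivity
    rw [mul_pow, sq_sqrt hs, mul_comm (1 / _), mul_one_div, ← mul_div_assoc, mul_self_sqrt hs]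
    field_simp
    ring
  rw [intervalIntegral.integral_eq_sub_of_hasDerivAt hderiv
    ((continuousOn_inv_sq_mul_inv_one_add_mul_sq hs).mono hpos).intervalIntegrable]
  simp only [inv_one, one_mul]
  ring

lemma totallyMonotone_integral_inv_sq_mul_inv_one_add {θ ε : ℝ} (hθ : 0 ≤ θ) (hε : 0 < ε)
    (hε1 : ε ≤ 1) :
    TotallyMonotone fun k : ℕ => ∫ t in ε..1, (t ^ 2)⁻¹ * (1 + k * θ * t ^ 2)⁻¹ := by
  simp only [intervalIntegral.integral_of_le hε1, mul_assoc]
  refine TotallyMonotone.integral (ae_restrict_of_forall_mem measurableSet_Ioc fun t _ => ?_)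
    fun k => ?_
  · exact (totallyMonotone_inv_one_add_mul (by positivity)).const_mul (by positivity)
  · have hcont := continuousOn_inv_sq_mul_inv_one_add_mul_sq (mul_nonneg k.cast_nonneg hθ)
    simp only [mul_assoc] at hcont
    exact ((hcont.mono fun t ht => hε.trans_le ht.1).integrableOn_Icc).mono_set
      Set.Ioc_subset_Icc_self

lemma totallyMonotone_inv_one_add_sqrt_mul_arctan_sub {θ ε : ℝ} (hθ : 0 ≤ θ) (hε : 0 < ε)
    (hε1 : ε ≤ 1) :
    TotallyMonotone fun k : ℕ =>
      (1 + √(k * θ) * (arctan √(k * θ) - arctan (ε * √(k * θ))))⁻¹ := by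
  set g : ℕ → ℝ := fun k => √(k * θ) * (arctan √(k * θ) - arctan (ε * √(k * θ)))
  set L : ℕ → ℝ := fun k => ∫ t in ε..1, (t ^ 2)⁻¹ * (1 + k * θ * t ^ 2)⁻¹
  have hg (k : ℕ) : 0 ≤ g k :=
    mul_nonneg (sqrt_nonneg _) (sub_nonneg.2 (arctan_strictMono.monotone
      (mul_le_of_le_one_left (sqrt_nonneg _) hε1)))
  have hL (k : ℕ) : 1 - ε * L k = ε * (1 + g k) := by
    have hLg : L k = ε⁻¹ - 1 - g k := integral_inv_sq_mul_inv_one_add_mul_sq (by positivity) hε hε1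
    rw [hLg, mul_sub, mul_sub, mul_inv_cancel₀ hε.ne']
    ring
  have hεL (k : ℕ) : ε * L k < 1 := by nlinarith [hL k, hg k]
  have hrepr : (fun k => (1 + g k)⁻¹) = fun k => ε * (1 - ε * L k)⁻¹ := by
    ext k
    rw [hL, mul_inv, ← mul_assoc, mul_inv_cancel₀ hε.ne', one_mul]
  change TotallyMonotone fun k => (1 + g k)⁻¹
  rw [hrepr]
  exact ((totallyMonotone_integral_inv_sq_mul_inv_one_add hθ hε hε1).const_mul hε.le).inv_one_sub
    hεL |>.const_mul hε.le

lemma totallyMonotone_inv_one_add_sqrt_mul_arctan {θ : ℝ} (hθ : 0 ≤ θ) :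
    TotallyMonotone fun k : ℕ => (1 + √(k * θ) * arctan √(k * θ))⁻¹ := by
  refine TotallyMonotone.of_tendsto (l := 𝓝[>] 0)
    (f := fun ε k => (1 + √(k * θ) * (arctan √(k * θ) - arctan (ε * √(k * θ))))⁻¹) ?_ fun k => ?_
  · filter_upwards [Ioc_mem_nhdsGT zero_lt_one] with ε hε
    exact totallyMonotone_inv_one_add_sqrt_mul_arctan_sub hθ hε.1 hε.2
  · have hne : 1 + √(k * θ) * (arctan √(k * θ) - arctan (0 * √(k * θ))) ≠ 0 := by
      rw [zero_mul, arctan_zero, sub_zero]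
      exact (add_pos_of_pos_of_nonneg one_pos (mul_nonneg (sqrt_nonneg _)
        (arctan_nonneg.2 (sqrt_nonneg _)))).ne'
    have hcont : ContinuousAt
        (fun ε => (1 + √(k * θ) * (arctan √(k * θ) - arctan (ε * √(k * θ))))⁻¹) 0 := by
      fun_prop (disch := exact hne)
    simpa using hcont.tendsto.mono_left nhdsWithin_le_nhds

lemma condCoverage_eq_one_sub_negDiff_pow (n : ℕ) (θ : ℝ) :
    condCoverage n θ
      = 1 - (negDiff ^ (n + 1)) (fun k : ℕ => (1 + √(k * θ) * arctan √(k * θ))⁻¹) 0 := by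
  rw [negDiff_pow_apply_eq_sum, sum_range_succ', condCoverage,
    ← Ico_add_one_right_eq_Icc, sum_Ico_eq_sum_range]
  simp only [Nat.add_sub_cancel, Nat.cast_zero, zero_mul, sqrt_zero, arctan_zero, mul_zero,
    add_zero, inv_one, pow_zero, Nat.choose_zero_right, Nat.cast_one, one_mul, zero_add,
    sub_add_cancel_right, ← sum_neg_distrib]
  refine sum_congr rfl fun k _ => ?_
  rw [add_comm 1 k, div_eq_mul_inv, pow_succ]
  ring

/-- `p(n,θ)` lies in `[0,1]` and is nondecreasing in the number of competing users `n`. -/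
theorem condCoverage_mem_unit_and_monotone (θ : ℝ) (hθ : 0 < θ) :
    (∀ n : ℕ, 0 ≤ condCoverage n θ ∧ condCoverage n θ ≤ 1) ∧
      Monotone (fun n => condCoverage n θ) := by
  have hc := totallyMonotone_inv_one_add_sqrt_mul_arctan hθ.le
  have hanti := hc.antitone_negDiff_pow 0
  have hc0 : (negDiff ^ 0) (fun k : ℕ => (1 + √(k * θ) * arctan √(k * θ))⁻¹) 0 = 1 := by simp
  simp only [condCoverage_eq_one_sub_negDiff_pow]
  refine ⟨fun n => ⟨?_, ?_⟩, fun m n hmn => ?_⟩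
  · linarith [hanti (Nat.zero_le (n + 1))]
  · linarith [hc (n + 1) 0]
  · linarith [hanti (Nat.succ_le_succ hmn)]
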